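/- Fix ρ > 0, d₁, d₂ > 0, d = d₁ + d₂, and write q₁(u) = Q(√(2d₁ρu)). For all x, y, z > 0 define P^{NC}(x,z) = (1 − Q(√(2dρx)))(1 − Q(√(2dρz))); P^{C}(x,y,z) = (1 − q₁(x))(1 − q₁(z)) + (1 − q₁(x)) q₁(z) (1 − Q(√(2d₁ρz + 2d₂ρy))) + q₁(x)(1 − q₁(z)) (1 − Q(√(2d₁ρx + 2d₂ρy))); and P^{OC}(x,y,z) = (1 − q₁(x))(1 − q₁(z)) + (1 − q₁(x)) q₁(z) (1 − Q(√(2d₁ρz + 2d₂ρ·max(z,y)))) + q₁(x)(1 − q₁(z)) (1 − Q(√(2d₁ρx + 2d₂ρ·max(x,y)))) + q₁(x) q₁(z) (1 − Q(√(2dρx)))(1 − Q(√(2dρz))). Then for all x, y, z > 0, P^{OC}(x,y,z) ≥ max{ P^{C}(x,y,z), P^{NC}(x,z) }. -/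
import Mathlib


open MeasureTheory Real

/-- The Gaussian tail function `Q(x) = ∫_x^∞ (1/√(2π)) e^{−t²/2} dt`. -/
noncomputable def gaussQ (x : ℝ) : ℝ :=
  ∫ t in Set.Ioi x, (Real.sqrt (2 * Real.pi))⁻¹ * Real.exp (-t ^ 2 / 2)

lemma gaussQ_integrable :
    Integrable (fun t : ℝ => (Real.sqrt (2 * Real.pi))⁻¹ * Real.exp (-t ^ 2 / 2)) := by
  have h := (integrable_exp_neg_mul_sq (by norm_num : (0:ℝ) < 1/2)).const_mul
    (Real.sqrt (2 * Real.pi))⁻¹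
  convert h using 2 with t
  ring_nf

lemma gaussQ_nonneg (x : ℝ) : 0 ≤ gaussQ x := by
  apply setIntegral_nonneg measurableSet_Ioi
  intro t _
  positivity

lemma gaussQ_anti {a b : ℝ} (h : a ≤ b) : gaussQ b ≤ gaussQ a := by
  apply setIntegral_mono_set gaussQ_integrable.integrableOn
  · filter_upwards with t using by positivity
  · exact Filter.Eventually.of_forall (fun t ht => lt_of_le_of_lt h ht)

lemma gaussQ_le_one (x : ℝ) : gaussQ x ≤ 1 := by
  have h1 : gaussQ x ≤ ∫ t : ℝ, (Real.sqrt (2 * Real.pi))⁻¹ * Real.exp (-t ^ 2 / 2) := by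
    apply setIntegral_le_integral gaussQ_integrable
    filter_upwards with t using by positivity
  have h2 : (∫ t : ℝ, (Real.sqrt (2 * Real.pi))⁻¹ * Real.exp (-t ^ 2 / 2)) = 1 := by
    rw [integral_const_mul]
    have : (∫ t : ℝ, Real.exp (-t ^ 2 / 2)) = ∫ t : ℝ, Real.exp (-(1/2) * t ^ 2) := by
      congr 1; funext t; ring_nf
    rw [this, integral_gaussian]
    rw [inv_mul_eq_one₀ (by positivity)]
    rw [show Real.pi / (1/2) = 2 * Real.pi by ring]
  linarith

/-- Fix `ρ > 0`, `d₁, d₂ > 0`, `d = d₁ + d₂`, and write `q₁(u) = Q(√(2d₁ρu))`.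
For all channel realizations `x, y, z > 0` the OCSA conditional joint-success
probability dominates both the CSA and the non-cooperative ones:
`P^{OC}(x,y,z) ≥ max{P^C(x,y,z), P^{NC}(x,z)}`. -/
theorem ocsa_pointwise_dominates (ρ d₁ d₂ d : ℝ)
    (hρ : 0 < ρ) (hd₁ : 0 < d₁) (hd₂ : 0 < d₂) (hd : d = d₁ + d₂)
    (x y z : ℝ) (hx : 0 < x) (hy : 0 < y) (hz : 0 < z) :
    (1 - gaussQ (Real.sqrt (2 * d₁ * ρ * x))) * (1 - gaussQ (Real.sqrt (2 * d₁ * ρ * z))) +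
      (1 - gaussQ (Real.sqrt (2 * d₁ * ρ * x))) * gaussQ (Real.sqrt (2 * d₁ * ρ * z)) *
        (1 - gaussQ (Real.sqrt (2 * d₁ * ρ * z + 2 * d₂ * ρ * max z y))) +
      gaussQ (Real.sqrt (2 * d₁ * ρ * x)) * (1 - gaussQ (Real.sqrt (2 * d₁ * ρ * z))) *
        (1 - gaussQ (Real.sqrt (2 * d₁ * ρ * x + 2 * d₂ * ρ * max x y))) +
      gaussQ (Real.sqrt (2 * d₁ * ρ * x)) * gaussQ (Real.sqrt (2 * d₁ * ρ * z)) *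
        ((1 - gaussQ (Real.sqrt (2 * d * ρ * x))) * (1 - gaussQ (Real.sqrt (2 * d * ρ * z)))) ≥
      max
        ((1 - gaussQ (Real.sqrt (2 * d₁ * ρ * x))) * (1 - gaussQ (Real.sqrt (2 * d₁ * ρ * z))) +
          (1 - gaussQ (Real.sqrt (2 * d₁ * ρ * x))) * gaussQ (Real.sqrt (2 * d₁ * ρ * z)) *
            (1 - gaussQ (Real.sqrt (2 * d₁ * ρ * z + 2 * d₂ * ρ * y))) +
          gaussQ (Real.sqrt (2 * d₁ * ρ * x)) * (1 - gaussQ (Real.sqrt (2 * d₁ * ρ * z))) *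
            (1 - gaussQ (Real.sqrt (2 * d₁ * ρ * x + 2 * d₂ * ρ * y))))
        ((1 - gaussQ (Real.sqrt (2 * d * ρ * x))) * (1 - gaussQ (Real.sqrt (2 * d * ρ * z)))) := by
  subst hd
  set a := gaussQ (Real.sqrt (2 * d₁ * ρ * x)) with ha
  set b := gaussQ (Real.sqrt (2 * d₁ * ρ * z)) with hb
  set A := gaussQ (Real.sqrt (2 * (d₁ + d₂) * ρ * x)) with hA
  set B := gaussQ (Real.sqrt (2 * (d₁ + d₂) * ρ * z)) with hB
  set Sx := gaussQ (Real.sqrt (2 * d₁ * ρ * x + 2 * d₂ * ρ * max x y)) with hSx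
  set Sz := gaussQ (Real.sqrt (2 * d₁ * ρ * z + 2 * d₂ * ρ * max z y)) with hSz
  set Cx := gaussQ (Real.sqrt (2 * d₁ * ρ * x + 2 * d₂ * ρ * y)) with hCx
  set Cz := gaussQ (Real.sqrt (2 * d₁ * ρ * z + 2 * d₂ * ρ * y)) with hCz
  have ha0 : 0 ≤ a := gaussQ_nonneg _
  have hb0 : 0 ≤ b := gaussQ_nonneg _
  have ha1 : a ≤ 1 := gaussQ_le_one _
  have hb1 : b ≤ 1 := gaussQ_le_one _
  have hA0 : 0 ≤ A := gaussQ_nonneg _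
  have hB0 : 0 ≤ B := gaussQ_nonneg _
  have hA1 : A ≤ 1 := gaussQ_le_one _
  have hB1 : B ≤ 1 := gaussQ_le_one _
  -- Sx ≤ A : arg of Sx ≥ arg of A since max x y ≥ x
  have hSxA : Sx ≤ A := by
    apply gaussQ_anti
    apply Real.sqrt_le_sqrt
    have h' : 2 * d₂ * ρ * x ≤ 2 * d₂ * ρ * max x y :=
      mul_le_mul_of_nonneg_left (le_max_left _ _) (by positivity)
    nlinarith [h']
  have hSzB : Sz ≤ B := by
    apply gaussQ_anti
    apply Real.sqrt_le_sqrt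
    have h' : 2 * d₂ * ρ * z ≤ 2 * d₂ * ρ * max z y :=
      mul_le_mul_of_nonneg_left (le_max_left _ _) (by positivity)
    nlinarith [h']
  have hSxCx : Sx ≤ Cx := by
    apply gaussQ_anti
    apply Real.sqrt_le_sqrt
    have h' : 2 * d₂ * ρ * y ≤ 2 * d₂ * ρ * max x y :=
      mul_le_mul_of_nonneg_left (le_max_right _ _) (by positivity)
    linarith
  have hSzCz : Sz ≤ Cz := by
    apply gaussQ_anti
    apply Real.sqrt_le_sqrt
    have h' : 2 * d₂ * ρ * y ≤ 2 * d₂ * ρ * max z y :=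
      mul_le_mul_of_nonneg_left (le_max_right _ _) (by positivity)
    linarith
  have hCx1 : Cx ≤ 1 := gaussQ_le_one _
  have hCz1 : Cz ≤ 1 := gaussQ_le_one _
  have hSx0 : 0 ≤ Sx := gaussQ_nonneg _
  have hSz0 : 0 ≤ Sz := gaussQ_nonneg _
  clear_value a b A B Sx Sz Cx Cz
  clear ha hb hA hB hSx hSz hCx hCz
  rw [ge_iff_le, max_le_iff]
  constructor
  · -- C branch
    nlinarith [mul_nonneg (mul_nonneg (by linarith : (0:ℝ) ≤ 1 - a) hb0)
        (by linarith : (0:ℝ) ≤ Cz - Sz),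
      mul_nonneg (mul_nonneg ha0 (by linarith : (0:ℝ) ≤ 1 - b))
        (by linarith : (0:ℝ) ≤ Cx - Sx),
      mul_nonneg (mul_nonneg ha0 hb0)
        (mul_nonneg (by linarith : (0:ℝ) ≤ 1 - A) (by linarith : (0:ℝ) ≤ 1 - B))]
  · -- NC branch
    set N := (1 - A) * (1 - B) with hN
    have hNC1 : N ≤ 1 := by rw [hN]; nlinarith
    have hNC0 : 0 ≤ N := by rw [hN]; nlinarith
    have h2 : N ≤ 1 - Sz := by rw [hN]; nlinarith
    have h3 : N ≤ 1 - Sx := by rw [hN]; nlinarith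
    clear_value N
    clear hN hSxA hSzB hSxCx hSzCz hA0 hB0 hA1 hB1
    nlinarith [mul_nonneg (mul_nonneg (by linarith : (0:ℝ) ≤ 1 - a)
        (by linarith : (0:ℝ) ≤ 1 - b)) (by linarith : (0:ℝ) ≤ 1 - N),
      mul_nonneg (mul_nonneg (by linarith : (0:ℝ) ≤ 1 - a) hb0)
        (by linarith : (0:ℝ) ≤ (1 - Sz) - N),
      mul_nonneg (mul_nonneg ha0 (by linarith : (0:ℝ) ≤ 1 - b))
        (by linarith : (0:ℝ) ≤ (1 - Sx) - N)]
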